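/- For every function f : [t₀, ∞) → ℝ with t₀ > 0 and lim_{t→∞} f(t) = 0, there exists a function y : [t₀, ∞) → ℝ with y(t) = O(f(t)) as t → ∞, such that for all sufficiently large t in the domain of tan, (1 + f(t))·tan t = tan(t + y(t)). In fact y can be chosen with |y(t)| ≤ π·|f(t)| for all sufficiently large t. -/

import Mathlib

open Real Filter

/-! Take `y t = arctan ((1 + f t) tan t) - arctan (tan t)`. Away from the poles of `tan`,
`arctan (tan t)` differs from `t` by a multiple of `π`, so `tan (t + y t) = (1 + f t) tan t`.
Since `d/ds arctan (s x) = x / (1 + s²x²)` has absolute value at most `1 / (2s)`, the map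
`s ↦ arctan (s x)` is `1`-Lipschitz on `[1/2, ∞)`, whence `|y t| ≤ |f t|` once
`f t ≥ -1/2`. -/

lemma abs_div_one_add_sq_mul_le_one {s : ℝ} (hs : 1 / 2 ≤ s) (x : ℝ) :
    |x / (1 + (s * x) ^ 2)| ≤ 1 := by
  have hpos : 0 < 1 + (s * x) ^ 2 := by positivity
  rw [abs_div, abs_of_pos hpos, div_le_one hpos]
  have hsq : (s * x) ^ 2 = (s * |x|) ^ 2 := by rw [mul_pow, mul_pow, sq_abs]
  nlinarith [sq_nonneg (s * |x| - 1), abs_nonneg x]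

lemma abs_arctan_mul_sub_arctan_mul_le (x : ℝ) {c d : ℝ} (hc : 1 / 2 ≤ c) (hd : 1 / 2 ≤ d) :
    |arctan (d * x) - arctan (c * x)| ≤ |d - c| := by
  have hderiv (s : ℝ) : HasDerivAt (fun s => arctan (s * x)) (x / (1 + (s * x) ^ 2)) s := by
    simpa [div_eq_inv_mul] using (hasDerivAt_mul_const x).arctan
  simpa [Real.norm_eq_abs] using
    (convex_Ici (1 / 2 : ℝ)).norm_image_sub_le_of_norm_hasDerivWithin_le
    (fun s _ => (hderiv s).hasDerivWithinAt)
    (fun s hs => abs_div_one_add_sq_mul_le_one hs x) (Set.mem_Ici.2 hc) (Set.mem_Ici.2 hd)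

lemma exists_arctan_tan_eq_sub_int_mul_pi {t : ℝ} (ht : ∀ k : ℤ, t ≠ k * π + π / 2) :
    ∃ k : ℤ, arctan (tan t) = t - k * π := by
  set k := toIocDiv pi_pos (-(π / 2)) t
  have hmem := toIocMod_mem_Ioc pi_pos (-(π / 2)) t
  rw [← self_sub_toIocDiv_zsmul, zsmul_eq_mul] at hmem
  have hlt : t - k * π < π / 2 :=
    lt_of_le_of_ne (by linarith [hmem.2]) fun h => ht k (by linarith)
  refine ⟨k, ?_⟩
  rw [← tan_periodic.sub_int_mul_eq k, arctan_tan hmem.1 hlt]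

lemma tan_add_arctan_sub_arctan_tan {t : ℝ} (ht : ∀ k : ℤ, t ≠ k * π + π / 2) (a : ℝ) :
    tan (t + (arctan a - arctan (tan t))) = a := by
  obtain ⟨k, hk⟩ := exists_arctan_tan_eq_sub_int_mul_pi ht
  rw [hk, show t + (arctan a - (t - k * π)) = arctan a + k * π by ring,
    tan_periodic.int_mul k, tan_arctan]

theorem tan_multiplicative_shift_general (f : ℝ → ℝ)
    (hf : Tendsto f atTop (nhds 0)) :
    ∃ y : ℝ → ℝ, (∀ᶠ t in atTop, |y t| ≤ π * |f t|) ∧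
      ∀ᶠ t in atTop, (∀ k : ℤ, t ≠ k * π + π / 2) →
        (1 + f t) * Real.tan t = Real.tan (t + y t) := by
  refine ⟨fun t => arctan ((1 + f t) * tan t) - arctan (tan t), ?_,
    Eventually.of_forall fun t ht => (tan_add_arctan_sub_arctan_tan ht _).symm⟩
  have hf_ge : ∀ᶠ t in atTop, -(1 / 2) < f t := hf.eventually (Ioi_mem_nhds (by norm_num))
  filter_upwards [hf_ge] with t ht
  have hlip := abs_arctan_mul_sub_arctan_mul_le (tan t) (c := 1) (d := 1 + f t)
    (by norm_num) (by linarith)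
  rw [one_mul, add_sub_cancel_left] at hlip
  exact hlip.trans (le_mul_of_one_le_left (abs_nonneg _) (by linarith [pi_gt_three]))

/-- If f(t) → 0 as t → ∞, there is y with |y(t)| ≤ π·|f(t)| for all
sufficiently large t (in particular y(t) = O(f(t))), such that for all
sufficiently large t in the domain of tan, (1+f(t))·tan t = tan(t + y(t)). -/
theorem tan_multiplicative_shift (t₀ : ℝ) (ht₀ : 0 < t₀) (f : ℝ → ℝ)
    (hf : Tendsto f atTop (nhds 0)) :
    ∃ y : ℝ → ℝ, (∀ᶠ t in atTop, |y t| ≤ π * |f t|) ∧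
      ∀ᶠ t in atTop, (∀ k : ℤ, t ≠ k * π + π / 2) →
        (1 + f t) * Real.tan t = Real.tan (t + y t) :=
  tan_multiplicative_shift_general f hf
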